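/- arXiv:2603.16634 — 5 statements merged into one kernel-verified Lean document; each statement's English description precedes it below -/
import Mathlib

section
/- Let a, b, S > 0, r ≥ 0 and x > 0 be real numbers. If S⁻³·x³ − b·x² − (a + b²S³/2 + b·r)·x − (bS/2)·x·√(b²S⁴ + 4(a + b·x + b·r)·S) ≥ 0, then x ≥ (b·S³ + S·√(b²S⁴ + (4a + 2b²S³ + 4b·r + 2bS·√(b²S⁴ + 4aS + 4b·r·S))·S))/2. -/
theorem stmt_5 (a b S r x : ℝ) (ha : 0 < a) (hb : 0 < b) (hS : 0 < S)
    (hr : 0 ≤ r) (hx : 0 < x)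
    (h : S⁻¹ ^ 3 * x ^ 3 - b * x ^ 2 - (a + b ^ 2 * S ^ 3 / 2 + b * r) * x
      - b * S / 2 * x * Real.sqrt (b ^ 2 * S ^ 4 + 4 * (a + b * x + b * r) * S) ≥ 0) :
    x ≥ (b * S ^ 3 + S * Real.sqrt (b ^ 2 * S ^ 4
      + (4 * a + 2 * b ^ 2 * S ^ 3 + 4 * b * r
        + 2 * b * S * Real.sqrt (b ^ 2 * S ^ 4 + 4 * a * S + 4 * b * r * S)) * S)) / 2 := by
  set sd := Real.sqrt (b ^ 2 * S ^ 4 + 4 * a * S + 4 * b * r * S) with hsd_def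
  have hsd : 0 ≤ sd := Real.sqrt_nonneg _
  have h1 : sd ≤ Real.sqrt (b ^ 2 * S ^ 4 + 4 * (a + b * x + b * r) * S) := by
    apply Real.sqrt_le_sqrt
    nlinarith [mul_pos (mul_pos hb hx) hS]
  have hS3 : (0:ℝ) < S ^ 3 := by positivity
  have e1 : S ^ 3 * S⁻¹ ^ 3 = 1 := by field_simp
  have h3 : S⁻¹ ^ 3 * x ^ 3 - b * x ^ 2 - (a + b ^ 2 * S ^ 3 / 2 + b * r) * x
      - b * S / 2 * x * sd ≥ 0 := by
    have hcoef : 0 ≤ b * S / 2 * x := by positivity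
    nlinarith [mul_nonneg hcoef (sub_nonneg.mpr h1)]
  have h4 : x * (x ^ 2 - b * S ^ 3 * x - (a + b ^ 2 * S ^ 3 / 2 + b * r + b * S / 2 * sd) * S ^ 3) ≥ 0 := by
    have key : S ^ 3 * (S⁻¹ ^ 3 * x ^ 3 - b * x ^ 2 - (a + b ^ 2 * S ^ 3 / 2 + b * r) * x
        - b * S / 2 * x * sd)
        = x * (x ^ 2 - b * S ^ 3 * x - (a + b ^ 2 * S ^ 3 / 2 + b * r + b * S / 2 * sd) * S ^ 3) := by
      field_simp
      ring
    rw [← key]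
    exact mul_nonneg hS3.le h3
  have h2 : x ^ 2 - b * S ^ 3 * x - (a + b ^ 2 * S ^ 3 / 2 + b * r + b * S / 2 * sd) * S ^ 3 ≥ 0 := by
    by_contra hc
    push_neg at hc
    nlinarith [mul_pos hx (neg_pos.mpr hc)]
  have hK : 0 < a + b ^ 2 * S ^ 3 / 2 + b * r + b * S / 2 * sd := by positivity
  have hxb : b * S ^ 3 < 2 * x := by nlinarith [mul_pos hS3 hK]
  have hu : S * Real.sqrt (b ^ 2 * S ^ 4
      + (4 * a + 2 * b ^ 2 * S ^ 3 + 4 * b * r + 2 * b * S * sd) * S) ≤ 2 * x - b * S ^ 3 := by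
    rw [show S * Real.sqrt (b ^ 2 * S ^ 4
        + (4 * a + 2 * b ^ 2 * S ^ 3 + 4 * b * r + 2 * b * S * sd) * S)
        = Real.sqrt (S ^ 2 * (b ^ 2 * S ^ 4
        + (4 * a + 2 * b ^ 2 * S ^ 3 + 4 * b * r + 2 * b * S * sd) * S)) by
      rw [Real.sqrt_mul (by positivity), Real.sqrt_sq hS.le]]
    rw [show (2 * x - b * S ^ 3) = Real.sqrt ((2 * x - b * S ^ 3) ^ 2) from
      (Real.sqrt_sq (by linarith)).symm]
    apply Real.sqrt_le_sqrt
    nlinarith [h2]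
  linarith
end

section
/- For every ε > 0, the Aubin–Talenti function v_ε satisfies ∫_{ℝ³} ‖∇v_ε(x)‖² dx = 3^(3/2)·π²/4; in particular the integral is independent of ε. -/
/-!
The gradient of `v_ε` is `-3^(1/4) ε^(1/2) (ε² + ‖x‖²)^(-3/2) x`, so `‖∇v_ε‖²` is the radial
function `√3 ε r² / (ε² + r²)³` of `r = ‖x‖`. In polar coordinates the integral becomes
`4π √3 ε ∫₀^∞ r⁴ / (ε² + r²)³ dr`, and the substitution `r = ε t` turns this into
`4π √3 ∫₀^∞ t⁴ / (1 + t²)³ dt = 4π √3 · 3π/16`, which no longer depends on `ε`.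
-/

open Real MeasureTheory Set Filter Topology

theorem hasDerivAt_primitive_pow_four_div_one_add_sq_pow_three (t : ℝ) :
    HasDerivAt (fun s : ℝ => 3 / 8 * arctan s - s * (3 + 5 * s ^ 2) / (8 * (1 + s ^ 2) ^ 2))
      (t ^ 4 / (1 + t ^ 2) ^ 3) t := by
  have hnum : HasDerivAt (fun s : ℝ => s * (3 + 5 * s ^ 2)) (3 + 15 * t ^ 2) t :=
    ((hasDerivAt_id' t).mul (((hasDerivAt_pow 2 t).const_mul 5).const_add 3)).congr_deriv
      (by push_cast; ring)
  have hden : HasDerivAt (fun s : ℝ => 8 * (1 + s ^ 2) ^ 2) (32 * t * (1 + t ^ 2)) t :=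
    ((((hasDerivAt_pow 2 t).const_add 1).pow 2).const_mul 8).congr_deriv (by push_cast; ring)
  refine (((hasDerivAt_arctan t).const_mul (3 / 8)).sub
    (hnum.div hden (by positivity))).congr_deriv ?_
  field_simp
  ring

theorem tendsto_mul_three_add_five_mul_sq_div_atTop :
    Tendsto (fun t : ℝ => t * (3 + 5 * t ^ 2) / (8 * (1 + t ^ 2) ^ 2)) atTop (𝓝 0) := by
  have hbound : Tendsto (fun t : ℝ => 5 / 8 * t⁻¹) atTop (𝓝 0) := by
    simpa using tendsto_inv_atTop_zero.const_mul (5 / 8 : ℝ)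
  refine tendsto_of_tendsto_of_tendsto_of_le_of_le' tendsto_const_nhds hbound ?_ ?_
  · filter_upwards [eventually_ge_atTop 0] with t ht
    positivity
  · filter_upwards [eventually_gt_atTop 0] with t ht
    rw [div_le_iff₀ (by positivity)]
    field_simp
    nlinarith [sq_nonneg t, pow_pos ht 3, pow_pos ht 4, pow_pos ht 5]

theorem integral_Ioi_pow_four_div_one_add_sq_pow_three :
    ∫ t in Ioi (0 : ℝ), t ^ 4 / (1 + t ^ 2) ^ 3 = 3 * π / 16 := by
  have hlim : Tendsto
      (fun s : ℝ => 3 / 8 * arctan s - s * (3 + 5 * s ^ 2) / (8 * (1 + s ^ 2) ^ 2))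
      atTop (𝓝 (3 / 8 * (π / 2) - 0)) :=
    ((tendsto_arctan_atTop.mono_right nhdsWithin_le_nhds).const_mul _).sub
      tendsto_mul_three_add_five_mul_sq_div_atTop
  rw [integral_Ioi_of_hasDerivAt_of_nonneg'
    (fun t _ => hasDerivAt_primitive_pow_four_div_one_add_sq_pow_three t)
    (fun t _ => by positivity) hlim]
  simp only [arctan_zero, mul_zero, zero_mul, zero_div, sub_zero]
  ring

theorem integral_Ioi_pow_four_div_sq_add_sq_pow_three {a : ℝ} (ha : 0 < a) :
    ∫ r in Ioi (0 : ℝ), r ^ 4 / (a ^ 2 + r ^ 2) ^ 3 = 3 * π / (16 * a) := by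
  have hscale : ∀ t : ℝ,
      (a * t) ^ 4 / (a ^ 2 + (a * t) ^ 2) ^ 3 = (a ^ 2)⁻¹ * (t ^ 4 / (1 + t ^ 2) ^ 3) := by
    intro t
    field_simp
  have hsubst := integral_comp_mul_left_Ioi' (fun r : ℝ => r ^ 4 / (a ^ 2 + r ^ 2) ^ 3) 0 ha
  rw [mul_zero] at hsubst
  rw [← hsubst]
  simp only [hscale, integral_const_mul, integral_Ioi_pow_four_div_one_add_sq_pow_three,
    smul_eq_mul]
  field_simp

theorem integral_fun_norm_euclideanSpace_fin_three {F : Type*} [NormedAddCommGroup F]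
    [NormedSpace ℝ F] (f : ℝ → F) :
    ∫ x : EuclideanSpace ℝ (Fin 3), f ‖x‖ = (4 * π) • ∫ r in Ioi (0 : ℝ), r ^ 2 • f r := by
  rw [integral_fun_norm_addHaar volume f, finrank_euclideanSpace_fin, measureReal_def,
    EuclideanSpace.volume_ball_fin_three, ENNReal.ofReal_one, one_pow, one_mul,
    ENNReal.toReal_ofReal (by positivity), ← Nat.cast_smul_eq_nsmul ℝ, smul_smul]
  congr 1
  ring

noncomputable def aubinTalenti {E : Type*} [NormedAddCommGroup E] (ε : ℝ) (x : E) : ℝ :=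
  3 ^ ((1 : ℝ) / 4) * ε ^ ((1 : ℝ) / 2) * (ε ^ 2 + ‖x‖ ^ 2) ^ (-(1 : ℝ) / 2)

section Gradient

variable {E : Type*} [NormedAddCommGroup E] [InnerProductSpace ℝ E] [CompleteSpace E]

theorem HasGradientAt.const_mul {f : E → ℝ} {f' x : E} (c : ℝ) (hf : HasGradientAt f f' x) :
    HasGradientAt (fun y => c * f y) (c • f') x := by
  rw [hasGradientAt_iff_hasFDerivAt] at hf ⊢
  simpa using hf.const_mul c

theorem hasGradientAt_rpow_const_add_norm_sq {a : ℝ} (ha : 0 < a) (p : ℝ) (x : E) :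
    HasGradientAt (fun y : E => (a + ‖y‖ ^ 2) ^ p)
      ((2 * p * (a + ‖x‖ ^ 2) ^ (p - 1)) • x) x := by
  rw [hasGradientAt_iff_hasFDerivAt]
  refine (((hasStrictFDerivAt_norm_sq x).hasFDerivAt.const_add a).rpow_const
    (Or.inl (by positivity))).congr_fderiv ?_
  ext y
  simp
  ring

theorem norm_gradient_mul_rpow_neg_half_sq {a : ℝ} (ha : 0 < a) (c : ℝ) (x : E) :
    ‖gradient (fun y : E => c * (a + ‖y‖ ^ 2) ^ (-(1 : ℝ) / 2)) x‖ ^ 2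
      = c ^ 2 * (‖x‖ ^ 2 / (a + ‖x‖ ^ 2) ^ 3) := by
  have hpos : 0 < a + ‖x‖ ^ 2 := by positivity
  have hpow : ((a + ‖x‖ ^ 2) ^ (-(1 : ℝ) / 2 - 1)) ^ 2 = ((a + ‖x‖ ^ 2) ^ 3)⁻¹ := by
    rw [← rpow_mul_natCast hpos.le, show (-(1 : ℝ) / 2 - 1) * (2 : ℕ) = -(3 : ℕ) by norm_num,
      rpow_neg hpos.le, rpow_natCast]
  rw [((hasGradientAt_rpow_const_add_norm_sq ha _ x).const_mul c).gradient]
  simp only [norm_smul, Real.norm_eq_abs, mul_pow, sq_abs, hpow]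
  ring

theorem norm_gradient_aubinTalenti_sq {ε : ℝ} (hε : 0 < ε) (x : E) :
    ‖gradient (aubinTalenti ε) x‖ ^ 2 = √3 * ε * (‖x‖ ^ 2 / (ε ^ 2 + ‖x‖ ^ 2) ^ 3) := by
  have hconst : (3 ^ ((1 : ℝ) / 4) * ε ^ ((1 : ℝ) / 2)) ^ 2 = √3 * ε := by
    rw [mul_pow, ← rpow_mul_natCast (by norm_num), ← rpow_mul_natCast hε.le, sqrt_eq_rpow]
    norm_num
  unfold aubinTalenti
  rw [norm_gradient_mul_rpow_neg_half_sq (by positivity), hconst]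

end Gradient

/-- For every `ε > 0`, the Aubin–Talenti function
`v_ε(x) = 3^(1/4) ε^(1/2) (ε² + ‖x‖²)^(-1/2)` on `ℝ³` satisfies
`∫ ‖∇v_ε‖² = 3^(3/2) π² / 4`. -/
theorem stmt_9 (ε : ℝ) (hε : 0 < ε)
    (v : EuclideanSpace ℝ (Fin 3) → ℝ)
    (hv : ∀ x : EuclideanSpace ℝ (Fin 3),
      v x = 3 ^ ((1 : ℝ) / 4) * ε ^ ((1 : ℝ) / 2) * (ε ^ 2 + ‖x‖ ^ 2) ^ (-(1 : ℝ) / 2)) :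
    ∫ x : EuclideanSpace ℝ (Fin 3), ‖gradient v x‖ ^ 2
      = 3 ^ ((3 : ℝ) / 2) * π ^ 2 / 4 := by
  obtain rfl : v = aubinTalenti ε := funext hv
  have hradial : ∀ r : ℝ, r ^ 2 • (√3 * ε * (r ^ 2 / (ε ^ 2 + r ^ 2) ^ 3))
      = √3 * ε * (r ^ 4 / (ε ^ 2 + r ^ 2) ^ 3) := fun r => by rw [smul_eq_mul]; ring
  have h32 : (3 : ℝ) ^ ((3 : ℝ) / 2) = 3 * √3 := by
    rw [sqrt_eq_rpow, ← rpow_one_add' (by norm_num) (by norm_num)]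
    norm_num
  simp only [norm_gradient_aubinTalenti_sq hε]
  rw [integral_fun_norm_euclideanSpace_fin_three
    (fun r => √3 * ε * (r ^ 2 / (ε ^ 2 + r ^ 2) ^ 3))]
  simp only [hradial, integral_const_mul, integral_Ioi_pow_four_div_sq_add_sq_pow_three hε, h32,
    smul_eq_mul]
  field_simp
  ring
end

section
/- For every ε > 0, the Aubin–Talenti function v_ε satisfies ∫_{ℝ³} v_ε(x)⁶ dx = 3^(3/2)·π²/4; in particular the integral is independent of ε. -/
/-!
Since `v_ε(x) = ε^(-1/2) v_1(x / ε)` and `v_ε⁶` has the critical homogeneity `-3` in dimension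
three, the substitution `x = ε y` removes `ε`. For `ε = 1`, polar coordinates give
`∫ v_1⁶ = 3^(3/2) · 4π · ∫₀^∞ r² / (1 + r²)³ dr`, and the radial integral equals `π / 16` by an
elementary primitive.
-/

open Real MeasureTheory Filter Set Topology Module

noncomputable def sqDivOneAddSqCubeAntideriv (t : ℝ) : ℝ :=
  -t / (4 * (1 + t ^ 2) ^ 2) + t / (8 * (1 + t ^ 2)) + arctan t / 8

lemma hasDerivAt_sqDivOneAddSqCubeAntideriv (t : ℝ) :
    HasDerivAt sqDivOneAddSqCubeAntideriv (t ^ 2 / (1 + t ^ 2) ^ 3) t := by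
  have hsq : HasDerivAt (fun s : ℝ => 1 + s ^ 2) (2 * t) t := by
    simpa using (hasDerivAt_pow 2 t).const_add 1
  have hA : HasDerivAt (fun s : ℝ => -s / (4 * (1 + s ^ 2) ^ 2)) _ t :=
    (hasDerivAt_neg t).div ((hsq.pow 2).const_mul 4) (by positivity)
  have hB : HasDerivAt (fun s : ℝ => s / (8 * (1 + s ^ 2))) _ t :=
    (hasDerivAt_id' t).div (hsq.const_mul 8) (by positivity)
  have hC := (hasDerivAt_arctan t).div_const 8
  refine ((hA.add hB).add hC).congr_deriv ?_
  field_simp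
  ring

lemma tendsto_div_one_add_sq_atTop : Tendsto (fun t : ℝ => t / (1 + t ^ 2)) atTop (𝓝 0) := by
  have hinv : Tendsto (fun t : ℝ => t⁻¹ + t) atTop atTop :=
    tendsto_inv_atTop_zero.add_atTop tendsto_id
  refine hinv.inv_tendsto_atTop.congr' ?_
  filter_upwards [eventually_gt_atTop 0] with t ht
  rw [Pi.inv_apply]
  field_simp

lemma tendsto_sqDivOneAddSqCubeAntideriv_atTop :
    Tendsto sqDivOneAddSqCubeAntideriv atTop (𝓝 (π / 16)) := by
  have hinv : Tendsto (fun t : ℝ => (1 + t ^ 2)⁻¹) atTop (𝓝 0) :=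
    (tendsto_atTop_add_const_left _ _ (tendsto_pow_atTop two_ne_zero)).inv_tendsto_atTop
  have hA : Tendsto (fun t : ℝ => -t / (4 * (1 + t ^ 2) ^ 2)) atTop (𝓝 0) := by
    simpa using ((tendsto_div_one_add_sq_atTop.mul hinv).const_mul (-1 / 4 : ℝ)).congr fun t => by
      field_simp
  have hB : Tendsto (fun t : ℝ => t / (8 * (1 + t ^ 2))) atTop (𝓝 0) := by
    simpa using (tendsto_div_one_add_sq_atTop.div_const 8).congr fun t => by
      field_simp
  have hC : Tendsto (fun t : ℝ => arctan t / 8) atTop (𝓝 (π / 2 / 8)) :=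
    (tendsto_arctan_atTop.mono_right nhdsWithin_le_nhds).div_const 8
  rw [show π / 16 = 0 + 0 + π / 2 / 8 by ring]
  exact (hA.add hB).add hC

lemma integral_Ioi_sq_div_one_add_sq_pow_three :
    ∫ t in Ioi (0 : ℝ), t ^ 2 / (1 + t ^ 2) ^ 3 = π / 16 := by
  rw [integral_Ioi_of_hasDerivAt_of_nonneg' (fun t _ => hasDerivAt_sqDivOneAddSqCubeAntideriv t)
    (fun t _ => by positivity) tendsto_sqDivOneAddSqCubeAntideriv_atTop]
  simp [sqDivOneAddSqCubeAntideriv]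

lemma integral_inv_one_add_norm_sq_pow_three :
    ∫ x : EuclideanSpace ℝ (Fin 3), ((1 + ‖x‖ ^ 2) ^ 3)⁻¹ = π ^ 2 / 4 := by
  have hball : volume.real (Metric.ball (0 : EuclideanSpace ℝ (Fin 3)) 1) = π * 4 / 3 := by
    rw [measureReal_def, EuclideanSpace.volume_ball_fin_three, ENNReal.ofReal_one, one_pow,
      one_mul, ENNReal.toReal_ofReal (by positivity)]
  have hradial : ∀ r : ℝ, r ^ (3 - 1) • ((1 + r ^ 2) ^ 3)⁻¹ = r ^ 2 / (1 + r ^ 2) ^ 3 :=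
    fun r => rfl
  rw [integral_fun_norm_addHaar volume (fun r : ℝ => ((1 + r ^ 2) ^ 3)⁻¹),
    finrank_euclideanSpace_fin, hball]
  simp_rw [hradial, integral_Ioi_sq_div_one_add_sq_pow_three]
  simp only [nsmul_eq_mul, smul_eq_mul, Nat.cast_ofNat]
  ring

lemma integral_inv_sq_add_norm_sq_pow {E : Type*} [NormedAddCommGroup E] [NormedSpace ℝ E]
    [MeasurableSpace E] [BorelSpace E] [FiniteDimensional ℝ E] (μ : Measure E)
    [μ.IsAddHaarMeasure] (k : ℕ) {ε : ℝ} (hε : 0 < ε) :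
    ∫ x, ((ε ^ 2 + ‖x‖ ^ 2) ^ k)⁻¹ ∂μ
      = ε ^ finrank ℝ E / ε ^ (2 * k) * ∫ x, ((1 + ‖x‖ ^ 2) ^ k)⁻¹ ∂μ := by
  have hrescale :
      ∀ x : E, ((1 + ‖ε⁻¹ • x‖ ^ 2) ^ k)⁻¹ = ε ^ (2 * k) * ((ε ^ 2 + ‖x‖ ^ 2) ^ k)⁻¹ := by
    intro x
    rw [norm_smul, norm_inv, norm_of_nonneg hε.le, pow_mul, ← inv_pow, ← inv_pow, ← mul_pow]
    congr 1
    field_simp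
  have hcomp :=
    Measure.integral_comp_inv_smul_of_nonneg μ (fun y : E => ((1 + ‖y‖ ^ 2) ^ k)⁻¹) hε.le
  simp only [hrescale, integral_const_mul, smul_eq_mul] at hcomp
  rw [div_mul_eq_mul_div, eq_div_iff (by positivity), ← hcomp]
  ring

/-- For every `ε > 0`, the Aubin–Talenti function
`v_ε(x) = 3^(1/4) ε^(1/2) (ε² + ‖x‖²)^(-1/2)` on `ℝ³` satisfies
`∫ v_ε⁶ = 3^(3/2) π² / 4`. -/
theorem stmt_10 (ε : ℝ) (hε : 0 < ε)
    (v : EuclideanSpace ℝ (Fin 3) → ℝ)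
    (hv : ∀ x : EuclideanSpace ℝ (Fin 3),
      v x = 3 ^ ((1 : ℝ) / 4) * ε ^ ((1 : ℝ) / 2) * (ε ^ 2 + ‖x‖ ^ 2) ^ (-(1 : ℝ) / 2)) :
    ∫ x : EuclideanSpace ℝ (Fin 3), (v x) ^ 6 = 3 ^ ((3 : ℝ) / 2) * π ^ 2 / 4 := by
  have hv6 : ∀ x, v x ^ 6 = 3 ^ ((3 : ℝ) / 2) * ε ^ 3 * ((ε ^ 2 + ‖x‖ ^ 2) ^ 3)⁻¹ := fun x => by
    rw [hv x, mul_pow, mul_pow, ← rpow_natCast, ← rpow_natCast (ε ^ _),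
      ← rpow_natCast (_ ^ (-(1 : ℝ) / 2)), ← rpow_mul (by norm_num), ← rpow_mul hε.le,
      ← rpow_mul (by positivity)]
    norm_num [rpow_neg (by positivity : (0 : ℝ) ≤ ε ^ 2 + ‖x‖ ^ 2)]
  simp_rw [hv6]
  rw [integral_const_mul, integral_inv_sq_add_norm_sq_pow volume 3 hε, finrank_euclideanSpace_fin,
    integral_inv_one_add_norm_sq_pow_three]
  field_simp
end

section
/- Let r > 0 and let φ : ℝ³ → ℝ be a smooth function with 0 ≤ φ ≤ 1, φ ≡ 1 on the closed ball of radius r centered at 0, and support contained in the closed ball of radius 2r centered at 0. Define u_ε := φ·v_ε. Then there exist constants C > 0 and ε₀ > 0 such that for all ε ∈ (0, ε₀), |∫_{ℝ³} ‖∇u_ε(x)‖² dx − 3^(3/2)·π²/4| ≤ C·ε. -/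
open Real MeasureTheory Filter Set Topology

noncomputable section Stmt11Aux

local notation "EE" => EuclideanSpace ℝ (Fin 3)

lemma stmt11_key1D {ε : ℝ} (hε : 0 < ε) :
    ∫ y in Ioi (0:ℝ), y ^ 4 / (ε ^ 2 + y ^ 2) ^ 3 = 3 * π / (16 * ε) := by
  have hD : ∀ y : ℝ, 0 < ε ^ 2 + y ^ 2 := fun y => by positivity
  set F : ℝ → ℝ := fun y => 3 / (8 * ε) * arctan (y / ε) - 5 / 8 * (y / (ε ^ 2 + y ^ 2))
      + ε ^ 2 / 4 * (y / (ε ^ 2 + y ^ 2) ^ 2) with hF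
  have hderiv : ∀ y ∈ Ici (0:ℝ), HasDerivAt F (y ^ 4 / (ε ^ 2 + y ^ 2) ^ 3) y := by
    intro y _
    have hq : HasDerivAt (fun y : ℝ => ε ^ 2 + y ^ 2) (2 * y) y := by
      simpa using (hasDerivAt_pow 2 y).const_add (ε ^ 2)
    have hq2 : HasDerivAt (fun y : ℝ => (ε ^ 2 + y ^ 2) ^ 2) (2 * (ε ^ 2 + y ^ 2) * (2 * y)) y := by
      simpa [mul_comm, mul_assoc, mul_left_comm, Function.comp_def] using
        ((hasDerivAt_pow 2 (ε ^ 2 + y ^ 2)).comp y hq)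
    have h1 : HasDerivAt (fun y : ℝ => arctan (y / ε)) (1 / (1 + (y / ε) ^ 2) * (1 / ε)) y := by
      simpa [Function.comp_def] using (Real.hasDerivAt_arctan (y / ε)).comp y ((hasDerivAt_id y).div_const ε)
    have h2 : HasDerivAt (fun y : ℝ => y / (ε ^ 2 + y ^ 2))
        ((1 * (ε ^ 2 + y ^ 2) - y * (2 * y)) / (ε ^ 2 + y ^ 2) ^ 2) y :=
      (hasDerivAt_id y).div hq (hD y).ne'
    have h3 : HasDerivAt (fun y : ℝ => y / (ε ^ 2 + y ^ 2) ^ 2)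
        ((1 * (ε ^ 2 + y ^ 2) ^ 2 - y * (2 * (ε ^ 2 + y ^ 2) * (2 * y))) / ((ε ^ 2 + y ^ 2) ^ 2) ^ 2) y :=
      (hasDerivAt_id y).div hq2 (pow_ne_zero 2 (hD y).ne')
    have := ((h1.const_mul (3 / (8 * ε))).sub (h2.const_mul (5 / 8))).add (h3.const_mul (ε ^ 2 / 4))
    refine this.congr_deriv ?_
    have h1e : 1 + (y / ε) ^ 2 = (ε ^ 2 + y ^ 2) / ε ^ 2 := by field_simp
    rw [h1e]
    field_simp
    ring
  have hlim : Tendsto F atTop (𝓝 (3 * π / (16 * ε))) := by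
    have l1 : Tendsto (fun y : ℝ => arctan (y / ε)) atTop (𝓝 (π / 2)) := by
      exact (tendsto_nhds_of_tendsto_nhdsWithin Real.tendsto_arctan_atTop).comp
        (tendsto_id.atTop_div_const hε)
    have l2 : Tendsto (fun y : ℝ => y / (ε ^ 2 + y ^ 2)) atTop (𝓝 0) := by
      have : Tendsto (fun y : ℝ => (ε ^ 2 + y ^ 2) / y) atTop atTop := by
        apply tendsto_atTop_mono' _ _ tendsto_id
        filter_upwards [eventually_gt_atTop (0:ℝ)] with y hy
        simp only [id_eq]
        rw [le_div_iff₀ hy]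
        nlinarith
      have := this.inv_tendsto_atTop
      apply this.congr'
      filter_upwards [eventually_gt_atTop (0:ℝ)] with y hy
      simp only [Pi.inv_apply, inv_div]
    have l3 : Tendsto (fun y : ℝ => y / (ε ^ 2 + y ^ 2) ^ 2) atTop (𝓝 0) := by
      have : Tendsto (fun y : ℝ => ((ε ^ 2 + y ^ 2) ^ 2) / y) atTop atTop := by
        apply tendsto_atTop_mono' _ _ tendsto_id
        filter_upwards [eventually_ge_atTop (1:ℝ)] with y hy
        simp only [id_eq]
        rw [le_div_iff₀ (by linarith : (0:ℝ) < y)]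
        nlinarith [sq_nonneg ε, sq_nonneg (y ^ 2 - 1), sq_nonneg (ε ^ 2 + y ^ 2)]
      have := this.inv_tendsto_atTop
      apply this.congr'
      filter_upwards [eventually_gt_atTop (0:ℝ)] with y hy
      simp only [Pi.inv_apply, inv_div]
    have := ((l1.const_mul (3 / (8 * ε))).sub (l2.const_mul (5 / 8))).add (l3.const_mul (ε ^ 2 / 4))
    convert this using 2
    ring
  have h0 : F 0 = 0 := by simp [hF]
  rw [integral_Ioi_of_hasDerivAt_of_nonneg' hderiv
      (fun y _ => by positivity) hlim, h0, sub_zero]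

lemma stmt11_volball : (volume (Metric.ball (0:EE) 1)).toReal = 4 * π / 3 := by
  rw [EuclideanSpace.volume_ball]
  have hG : Real.Gamma ((Fintype.card (Fin 3) : ℝ) / 2 + 1) = 3 / 4 * Real.sqrt π := by
    have hc : ((Fintype.card (Fin 3) : ℝ)) = 3 := by simp
    rw [hc]
    have : (3:ℝ)/2 + 1 = (1/2 + 1) + 1 := by norm_num
    rw [this, Real.Gamma_add_one (by norm_num), Real.Gamma_add_one (by norm_num),
      Real.Gamma_one_half_eq]
    ring
  rw [hG]
  have h1 : Real.sqrt π ^ Fintype.card (Fin 3) / (3 / 4 * Real.sqrt π) = 4 * π / 3 := by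
    have hs : Real.sqrt π * Real.sqrt π = π := Real.mul_self_sqrt Real.pi_pos.le
    have hne : Real.sqrt π ≠ 0 := ne_of_gt (Real.sqrt_pos.mpr Real.pi_pos)
    have h3 : Real.sqrt π ^ 3 = π * Real.sqrt π := by
      rw [pow_succ, sq_sqrt Real.pi_pos.le]
    rw [Fintype.card_fin, h3]
    field_simp
  rw [h1]
  simp [ENNReal.toReal_mul, ENNReal.toReal_ofReal (by positivity : (0:ℝ) ≤ 4 * π / 3)]

lemma stmt11_mainInt {ε : ℝ} (hε : 0 < ε) :
    ∫ x : EE, Real.sqrt 3 * ε * ‖x‖ ^ 2 / (ε ^ 2 + ‖x‖ ^ 2) ^ 3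
      = 3 ^ ((3:ℝ)/2) * π ^ 2 / 4 := by
  have h := MeasureTheory.integral_fun_norm_addHaar (volume : Measure EE)
    (fun y : ℝ => Real.sqrt 3 * ε * y ^ 2 / (ε ^ 2 + y ^ 2) ^ 3)
  simp only [finrank_euclideanSpace, Fintype.card_fin, smul_eq_mul, nsmul_eq_mul] at h
  rw [h, measureReal_def, stmt11_volball]
  have h2 : ∫ y in Ioi (0:ℝ), y ^ (3 - 1) * (Real.sqrt 3 * ε * y ^ 2 / (ε ^ 2 + y ^ 2) ^ 3)
      = Real.sqrt 3 * ε * (3 * π / (16 * ε)) := by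
    rw [← stmt11_key1D hε, ← integral_const_mul]
    apply setIntegral_congr_fun measurableSet_Ioi
    intro y hy
    ring
  rw [h2]
  have h3 : (3:ℝ) ^ ((3:ℝ)/2) = 3 * Real.sqrt 3 := by
    rw [show (3:ℝ)/2 = 1 + 1/2 by norm_num, Real.rpow_add (by norm_num), Real.rpow_one,
      ← Real.sqrt_eq_rpow]
  rw [h3]
  field_simp
  ring

lemma stmt11_hvderiv {ε : ℝ} (hε : 0 < ε) (x : EE) :
    HasFDerivAt (fun y : EE => 3 ^ ((1:ℝ)/4) * ε ^ ((1:ℝ)/2) * (ε ^ 2 + ‖y‖ ^ 2) ^ (-(1:ℝ)/2))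
      ((-(3 ^ ((1:ℝ)/4) * ε ^ ((1:ℝ)/2) * (ε ^ 2 + ‖x‖ ^ 2) ^ (-(3:ℝ)/2)))
        • (innerSL ℝ x : EE →L[ℝ] ℝ)) x := by
  have hN : (0:ℝ) < ε ^ 2 + ‖x‖ ^ 2 :=
    lt_of_lt_of_le (pow_pos hε 2) (le_add_of_nonneg_right (sq_nonneg _))
  have hq : HasFDerivAt (fun y : EE => ε ^ 2 + ‖y‖ ^ 2)
      ((2:ℕ) • (innerSL ℝ x : EE →L[ℝ] ℝ)) x :=
    (hasStrictFDerivAt_norm_sq x).hasFDerivAt.const_add (ε ^ 2)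
  have hr : HasDerivAt (fun t : ℝ => t ^ (-(1:ℝ)/2))
      ((-(1:ℝ)/2) * (ε ^ 2 + ‖x‖ ^ 2) ^ ((-(1:ℝ)/2) - 1)) (ε ^ 2 + ‖x‖ ^ 2) :=
    Real.hasDerivAt_rpow_const (Or.inl hN.ne')
  have hcomp := (hr.comp_hasFDerivAt x hq).const_mul (3 ^ ((1:ℝ)/4) * ε ^ ((1:ℝ)/2))
  refine hcomp.congr_fderiv ?_
  ext y
  simp only [ContinuousLinearMap.coe_smul', Pi.smul_apply, innerSL_apply_norm,
    ContinuousLinearMap.smul_apply, smul_eq_mul, nsmul_eq_mul, Nat.cast_ofNat]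
  have he : (ε ^ 2 + ‖x‖ ^ 2) ^ ((-(1:ℝ)/2) - 1) = (ε ^ 2 + ‖x‖ ^ 2) ^ (-(3:ℝ)/2) := by
    norm_num
  rw [he]
  ring

lemma stmt11_normfd {ε : ℝ} (hε : 0 < ε) (x : EE) :
    ‖fderiv ℝ (fun y : EE => 3 ^ ((1:ℝ)/4) * ε ^ ((1:ℝ)/2)
        * (ε ^ 2 + ‖y‖ ^ 2) ^ (-(1:ℝ)/2)) x‖ ^ 2
      = Real.sqrt 3 * ε * ‖x‖ ^ 2 / (ε ^ 2 + ‖x‖ ^ 2) ^ 3 := by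
  have hN : (0:ℝ) < ε ^ 2 + ‖x‖ ^ 2 :=
    lt_of_lt_of_le (pow_pos hε 2) (le_add_of_nonneg_right (sq_nonneg _))
  rw [(stmt11_hvderiv hε x).fderiv]
  rw [norm_smul, innerSL_apply_norm]
  have hk : (0:ℝ) < 3 ^ ((1:ℝ)/4) * ε ^ ((1:ℝ)/2) * (ε ^ 2 + ‖x‖ ^ 2) ^ (-(3:ℝ)/2) := by
    have h1 : (0:ℝ) < (3:ℝ) ^ ((1:ℝ)/4) := Real.rpow_pos_of_pos (by norm_num) _
    have h2 : (0:ℝ) < ε ^ ((1:ℝ)/2) := Real.rpow_pos_of_pos hε _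
    have h3 : (0:ℝ) < (ε ^ 2 + ‖x‖ ^ 2) ^ (-(3:ℝ)/2) := Real.rpow_pos_of_pos hN _
    positivity
  rw [norm_neg, Real.norm_of_nonneg hk.le]
  have e1 : ((3:ℝ) ^ ((1:ℝ)/4)) ^ 2 = Real.sqrt 3 := by
    rw [← Real.rpow_natCast ((3:ℝ) ^ ((1:ℝ)/4)) 2, ← Real.rpow_mul (by norm_num : (0:ℝ) ≤ 3),
      Real.sqrt_eq_rpow]
    norm_num
  have e2 : (ε ^ ((1:ℝ)/2)) ^ 2 = ε := by
    rw [← Real.rpow_natCast (ε ^ ((1:ℝ)/2)) 2, ← Real.rpow_mul hε.le]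
    norm_num
  have e3 : ((ε ^ 2 + ‖x‖ ^ 2) ^ (-(3:ℝ)/2)) ^ 2 = ((ε ^ 2 + ‖x‖ ^ 2) ^ 3)⁻¹ := by
    rw [← Real.rpow_natCast ((ε ^ 2 + ‖x‖ ^ 2) ^ (-(3:ℝ)/2)) 2, ← Real.rpow_mul hN.le]
    norm_num
  have expand : (3 ^ ((1:ℝ)/4) * ε ^ ((1:ℝ)/2) * (ε ^ 2 + ‖x‖ ^ 2) ^ (-(3:ℝ)/2) * ‖x‖) ^ 2
      = ((3:ℝ) ^ ((1:ℝ)/4)) ^ 2 * (ε ^ ((1:ℝ)/2)) ^ 2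
        * ((ε ^ 2 + ‖x‖ ^ 2) ^ (-(3:ℝ)/2)) ^ 2 * ‖x‖ ^ 2 := by ring
  rw [expand, e1, e2, e3]
  field_simp

lemma stmt11_gradnorm (f : EE → ℝ) (x : EE) : ‖gradient f x‖ = ‖fderiv ℝ f x‖ := by
  rw [gradient]
  exact LinearIsometryEquiv.norm_map _ _

lemma stmt11_vsq {ε : ℝ} (hε : 0 < ε) (x : EE) :
    (3 ^ ((1:ℝ)/4) * ε ^ ((1:ℝ)/2) * (ε ^ 2 + ‖x‖ ^ 2) ^ (-(1:ℝ)/2)) ^ 2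
      = Real.sqrt 3 * ε / (ε ^ 2 + ‖x‖ ^ 2) := by
  have hN : (0:ℝ) < ε ^ 2 + ‖x‖ ^ 2 :=
    lt_of_lt_of_le (pow_pos hε 2) (le_add_of_nonneg_right (sq_nonneg _))
  have e1 : ((3:ℝ) ^ ((1:ℝ)/4)) ^ 2 = Real.sqrt 3 := by
    rw [← Real.rpow_natCast ((3:ℝ) ^ ((1:ℝ)/4)) 2, ← Real.rpow_mul (by norm_num : (0:ℝ) ≤ 3),
      Real.sqrt_eq_rpow]
    norm_num
  have e2 : (ε ^ ((1:ℝ)/2)) ^ 2 = ε := by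
    rw [← Real.rpow_natCast (ε ^ ((1:ℝ)/2)) 2, ← Real.rpow_mul hε.le]
    norm_num
  have e3 : ((ε ^ 2 + ‖x‖ ^ 2) ^ (-(1:ℝ)/2)) ^ 2 = (ε ^ 2 + ‖x‖ ^ 2)⁻¹ := by
    rw [← Real.rpow_natCast ((ε ^ 2 + ‖x‖ ^ 2) ^ (-(1:ℝ)/2)) 2, ← Real.rpow_mul hN.le]
    norm_num
    exact Real.rpow_neg_one _
  have expand : (3 ^ ((1:ℝ)/4) * ε ^ ((1:ℝ)/2) * (ε ^ 2 + ‖x‖ ^ 2) ^ (-(1:ℝ)/2)) ^ 2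
      = ((3:ℝ) ^ ((1:ℝ)/4)) ^ 2 * (ε ^ ((1:ℝ)/2)) ^ 2
        * ((ε ^ 2 + ‖x‖ ^ 2) ^ (-(1:ℝ)/2)) ^ 2 := by ring
  rw [expand, e1, e2, e3]
  field_simp

end Stmt11Aux
local notation "EE" => EuclideanSpace ℝ (Fin 3)

set_option maxHeartbeats 3200000 in
/-- With `φ` a smooth cutoff (`0 ≤ φ ≤ 1`, `φ ≡ 1` on `closedBall 0 r`,
support in `closedBall 0 (2r)`) and `u_ε = φ v_ε`, there are `C > 0`, `ε₀ > 0` such that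
for all `ε ∈ (0, ε₀)`, `|∫ ‖∇u_ε‖² - 3^(3/2) π²/4| ≤ C ε`. -/
theorem stmt_11 (r : ℝ) (hr : 0 < r) (φ : EuclideanSpace ℝ (Fin 3) → ℝ)
    (hφ : ContDiff ℝ (⊤ : ℕ∞) φ) (hφ0 : ∀ x, 0 ≤ φ x) (hφ1 : ∀ x, φ x ≤ 1)
    (hφeq : ∀ x ∈ Metric.closedBall (0 : EuclideanSpace ℝ (Fin 3)) r, φ x = 1)
    (hφsupp : Function.support φ ⊆ Metric.closedBall (0 : EuclideanSpace ℝ (Fin 3)) (2 * r)) :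
    ∃ C > (0 : ℝ), ∃ ε₀ > (0 : ℝ), ∀ ε : ℝ, 0 < ε → ε < ε₀ →
      |(∫ x : EuclideanSpace ℝ (Fin 3),
          ‖gradient (fun y : EuclideanSpace ℝ (Fin 3) =>
            φ y * (3 ^ ((1 : ℝ) / 4) * ε ^ ((1 : ℝ) / 2)
              * (ε ^ 2 + ‖y‖ ^ 2) ^ (-(1 : ℝ) / 2))) x‖ ^ 2)
        - 3 ^ ((3 : ℝ) / 2) * π ^ 2 / 4| ≤ C * ε := by
  classical
  -- cutoff has compact support
  have hφc : HasCompactSupport φ :=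
    HasCompactSupport.intro (isCompact_closedBall _ _)
      (fun x hx => by_contra fun h => hx (hφsupp h))
  obtain ⟨M, hM⟩ := (hφc.fderiv (𝕜 := ℝ)).exists_bound_of_continuous
    (hφ.continuous_fderiv (by simp))
  have hM0 : (0:ℝ) ≤ M := le_trans (norm_nonneg _) (hM 0)
  -- the set where the cutoff may differ from 1
  set S1 : Set EE := {x : EE | r ≤ ‖x‖} with hS1
  have hS1m : MeasurableSet S1 := measurableSet_le measurable_const measurable_norm
  set S2 : Set EE := Metric.closedBall (0:EE) (2*r) with hS2
  have hS2m : MeasurableSet S2 := measurableSet_closedBall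
  -- integrability of ‖x‖⁻⁴ off the ball
  have h4 : ((Module.finrank ℝ EE : ℝ)) < 4 := by
    simp only [finrank_euclideanSpace, Fintype.card_fin]
    norm_num
  have hK1i : IntegrableOn (fun x : EE => (‖x‖ ^ 4)⁻¹) S1 := by
    refine ((integrable_one_add_norm (E := EE) h4).const_mul
      ((1 + 1/r) ^ 4)).restrict.mono' ?_ ?_
    · exact ((measurable_norm.pow_const 4).inv).aestronglyMeasurable
    · rw [ae_restrict_iff' hS1m]
      refine ae_of_all _ fun x hx => ?_
      have hx0 : (0:ℝ) < ‖x‖ := lt_of_lt_of_le hr hx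
      have hb : (1 + ‖x‖) ≤ (1 + 1/r) * ‖x‖ := by
        rw [add_mul, one_mul]
        have : 1 ≤ ‖x‖ / r := (one_le_div hr).mpr hx
        have h1 : (1:ℝ) ≤ 1/r * ‖x‖ := by
          rw [one_div, inv_mul_eq_div]
          linarith [(one_le_div hr).mpr hx]
        linarith
      have hpow : (1 + ‖x‖) ^ 4 ≤ ((1 + 1/r) * ‖x‖) ^ 4 :=
        pow_le_pow_left₀ (by positivity) hb 4
      rw [Real.norm_eq_abs, abs_of_nonneg (by positivity)]
      have h14 : (1 + ‖x‖ : ℝ) ^ (-(4:ℝ)) = ((1 + ‖x‖) ^ 4)⁻¹ := by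
        rw [Real.rpow_neg (by positivity), ← Real.rpow_natCast (1 + ‖x‖) 4]
        norm_num
      rw [h14, inv_eq_one_div, inv_eq_one_div, mul_one_div,
        div_le_div_iff₀ (by positivity) (by positivity)]
      rw [mul_pow] at hpow
      linarith
  set K1 : ℝ := ∫ x in S1, (‖x‖ ^ 4)⁻¹ with hK1
  have hK1nn : 0 ≤ K1 :=
    setIntegral_nonneg hS1m (fun x _ => by positivity)
  set K2 : ℝ := (volume S2).toReal with hK2
  have hK2nn : 0 ≤ K2 := by rw [hK2]; exact ENNReal.toReal_nonneg
  have hs3 : (0:ℝ) ≤ Real.sqrt 3 := Real.sqrt_nonneg 3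
  have hCpos : (0:ℝ) < 3 * Real.sqrt 3 * K1 + 2 * M ^ 2 * Real.sqrt 3 / r ^ 2 * K2 + 1 := by
    have h1 : (0:ℝ) ≤ 3 * Real.sqrt 3 * K1 := by positivity
    have h2 : (0:ℝ) ≤ 2 * M ^ 2 * Real.sqrt 3 / r ^ 2 * K2 := by positivity
    linarith
  refine ⟨3 * Real.sqrt 3 * K1 + 2 * M ^ 2 * Real.sqrt 3 / r ^ 2 * K2 + 1, hCpos, 1, one_pos, ?_⟩
  intro ε hε hε1
  -- abbreviations
  set v : EE → ℝ := fun y => 3 ^ ((1:ℝ)/4) * ε ^ ((1:ℝ)/2) * (ε ^ 2 + ‖y‖ ^ 2) ^ (-(1:ℝ)/2)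
    with hv
  set u : EE → ℝ := fun y =>
    φ y * (3 ^ ((1:ℝ)/4) * ε ^ ((1:ℝ)/2) * (ε ^ 2 + ‖y‖ ^ 2) ^ (-(1:ℝ)/2)) with hu
  have hN : ∀ x : EE, (0:ℝ) < ε ^ 2 + ‖x‖ ^ 2 := fun x =>
    lt_of_lt_of_le (pow_pos hε 2) (le_add_of_nonneg_right (sq_nonneg _))
  have hvpos : ∀ x, 0 < v x := fun x =>
    mul_pos (mul_pos (Real.rpow_pos_of_pos (by norm_num) _) (Real.rpow_pos_of_pos hε _))
      (Real.rpow_pos_of_pos (hN x) _)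
  set A : EE → ℝ := fun x => Real.sqrt 3 * ε * ‖x‖ ^ 2 / (ε ^ 2 + ‖x‖ ^ 2) ^ 3 with hA
  have hA0 : ∀ x, 0 ≤ A x := fun x => by positivity
  have hAfd : ∀ x : EE, ‖fderiv ℝ v x‖ ^ 2 = A x := fun x => stmt11_normfd hε x
  have hvsq : ∀ x : EE, v x ^ 2 = Real.sqrt 3 * ε / (ε ^ 2 + ‖x‖ ^ 2) := fun x =>
    stmt11_vsq hε x
  have hvdiff : Differentiable ℝ v := fun x => (stmt11_hvderiv hε x).differentiableAt
  have hφdiff : Differentiable ℝ φ := hφ.differentiable (by simp)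
  have hfdu : ∀ x, fderiv ℝ u x = φ x • fderiv ℝ v x + v x • fderiv ℝ φ x := fun x =>
    fderiv_mul (hφdiff x) (hvdiff x)
  have hvcd : ContDiff ℝ (⊤ : ℕ∞) v := by
    have base : ContDiff ℝ (⊤ : ℕ∞) (fun y : EE => ε ^ 2 + ‖y‖ ^ 2) :=
      contDiff_const.add (contDiff_norm_sq ℝ)
    exact contDiff_const.mul (base.rpow_const_of_ne (fun x => (hN x).ne'))
  have hucd : ContDiff ℝ (⊤ : ℕ∞) u := hφ.mul hvcd
  have hucs : HasCompactSupport u :=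
    HasCompactSupport.intro (isCompact_closedBall (0:EE) (2*r)) (fun x hx => by
      have hφx : φ x = 0 := by
        by_contra h
        exact hx (hφsupp h)
      simp [hu, hφx])
  have hcont : Continuous fun x : EE => ‖fderiv ℝ u x‖ ^ 2 :=
    ((hucd.continuous_fderiv (by simp)).norm).pow 2
  have hcs2 : HasCompactSupport fun x : EE => ‖fderiv ℝ u x‖ ^ 2 := by
    have := (hucs.fderiv (𝕜 := ℝ)).comp_left (g := fun L : EE →L[ℝ] ℝ => ‖L‖ ^ 2) (by simp)
    simpa [Function.comp_def] using this
  have hint_u : Integrable fun x : EE => ‖fderiv ℝ u x‖ ^ 2 :=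
    hcont.integrable_of_hasCompactSupport hcs2
  have hε2 : ε ^ 2 ≤ 1 := by nlinarith
  have hint_A : Integrable A := by
    refine ((integrable_one_add_norm (E := EE) h4).const_mul
      (16 * Real.sqrt 3 / ε ^ 3)).mono' ?_ (ae_of_all _ fun x => ?_)
    · refine Continuous.aestronglyMeasurable ?_
      exact ((continuous_const.mul (continuous_norm.pow 2)).div
        ((continuous_const.add (continuous_norm.pow 2)).pow 3)
        (fun x => (pow_pos (hN x) 3).ne'))
    · rw [Real.norm_eq_abs, abs_of_nonneg (hA0 x)]
      have hrp : (1 + ‖x‖ : ℝ) ^ (-(4:ℝ)) = ((1 + ‖x‖) ^ 4)⁻¹ := by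
        rw [Real.rpow_neg (by positivity), ← Real.rpow_natCast (1 + ‖x‖) 4]
        norm_num
      rw [hrp]
      have step1 : A x ≤ Real.sqrt 3 * ε / (ε ^ 2 + ‖x‖ ^ 2) ^ 2 := by
        rw [hA]
        have hD := hN x
        rw [div_le_div_iff₀ (by positivity) (by positivity)]
        have h1 : ‖x‖ ^ 2 ≤ ε ^ 2 + ‖x‖ ^ 2 := by nlinarith [sq_nonneg ε]
        have h2 : (0:ℝ) ≤ Real.sqrt 3 * ε := by positivity
        nlinarith [pow_pos hD 2, mul_le_mul_of_nonneg_left h1 h2,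
          mul_le_mul_of_nonneg_left (mul_le_mul_of_nonneg_left h1 h2) (pow_pos hD 2).le]
      have step2 : ε ^ 2 * (1 + ‖x‖) ^ 2 ≤ 4 * (ε ^ 2 + ‖x‖ ^ 2) := by
        nlinarith [hε2, sq_nonneg (‖x‖ - 1), sq_nonneg ‖x‖, norm_nonneg x,
          sq_nonneg (3*‖x‖ - 1), sq_nonneg (ε * (1 + ‖x‖)), sq_nonneg ε]
      have key : ε ^ 4 * (1 + ‖x‖) ^ 4 ≤ 16 * (ε ^ 2 + ‖x‖ ^ 2) ^ 2 := by
        have h := pow_le_pow_left₀ (by positivity : (0:ℝ) ≤ ε ^ 2 * (1 + ‖x‖) ^ 2) step2 2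
        calc ε ^ 4 * (1 + ‖x‖) ^ 4 = (ε ^ 2 * (1 + ‖x‖) ^ 2) ^ 2 := by ring
          _ ≤ (4 * (ε ^ 2 + ‖x‖ ^ 2)) ^ 2 := h
          _ = 16 * (ε ^ 2 + ‖x‖ ^ 2) ^ 2 := by ring
      refine step1.trans ?_
      have hform : 16 * Real.sqrt 3 / ε ^ 3 * ((1 + ‖x‖) ^ 4)⁻¹
          = 16 * Real.sqrt 3 / (ε ^ 3 * (1 + ‖x‖) ^ 4) := by
        field_simp
      rw [hform, div_le_div_iff₀ (pow_pos (hN x) 2) (by positivity)]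
      calc Real.sqrt 3 * ε * (ε ^ 3 * (1 + ‖x‖) ^ 4)
          = Real.sqrt 3 * (ε ^ 4 * (1 + ‖x‖) ^ 4) := by ring
        _ ≤ Real.sqrt 3 * (16 * (ε ^ 2 + ‖x‖ ^ 2) ^ 2) := mul_le_mul_of_nonneg_left key hs3
        _ = 16 * Real.sqrt 3 * (ε ^ 2 + ‖x‖ ^ 2) ^ 2 := by ring
  -- rewrite the integrand via fderiv
  simp only [stmt11_gradnorm]
  rw [show (3:ℝ) ^ ((3:ℝ)/2) * π ^ 2 / 4 = ∫ x : EE, A x from (stmt11_mainInt hε).symm,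
    ← integral_sub hint_u hint_A]
  -- dominating function
  set g : EE → ℝ := fun x => S1.indicator (fun y => 3 * (Real.sqrt 3 * ε) * (‖y‖ ^ 4)⁻¹) x
    + S2.indicator (fun _ => 2 * M ^ 2 * (Real.sqrt 3 * ε) / r ^ 2) x with hg
  have hgint1 : Integrable (S1.indicator fun y : EE => 3 * (Real.sqrt 3 * ε) * (‖y‖ ^ 4)⁻¹) := by
    rw [integrable_indicator_iff hS1m]
    exact hK1i.const_mul _
  have hgint2 : Integrable (S2.indicator fun _ : EE => 2 * M ^ 2 * (Real.sqrt 3 * ε) / r ^ 2) := by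
    rw [integrable_indicator_iff hS2m]
    exact integrableOn_const measure_closedBall_lt_top.ne
  have hgint : Integrable g := hgint1.add hgint2
  -- pointwise bound
  have hptwise : ∀ x : EE, |‖fderiv ℝ u x‖ ^ 2 - A x| ≤ g x := by
    intro x
    by_cases hx : ‖x‖ < r
    · have hball : Metric.ball (0:EE) r ∈ 𝓝 x :=
        Metric.isOpen_ball.mem_nhds (by simpa [mem_ball_zero_iff] using hx)
      have hev : u =ᶠ[𝓝 x] v := by
        filter_upwards [hball] with y hy
        have h1 : φ y = 1 := hφeq y (Metric.ball_subset_closedBall hy)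
        simp only [hu, hv, h1, one_mul]
      rw [hev.fderiv_eq, hAfd x, sub_self, abs_zero]
      rw [hg]
      have i1 : (0:ℝ) ≤ S1.indicator (fun y : EE => 3 * (Real.sqrt 3 * ε) * (‖y‖ ^ 4)⁻¹) x :=
        Set.indicator_nonneg (fun y _ => by positivity) x
      have i2 : (0:ℝ) ≤ S2.indicator (fun _ : EE => 2 * M ^ 2 * (Real.sqrt 3 * ε) / r ^ 2) x :=
        Set.indicator_nonneg (fun y _ => by positivity) x
      linarith
    · push_neg at hx
      have hxS1 : x ∈ S1 := hx
      have hx0 : (0:ℝ) < ‖x‖ := lt_of_lt_of_le hr hx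
      have hb1 : ‖fderiv ℝ u x‖ ≤ ‖fderiv ℝ v x‖ + v x * ‖fderiv ℝ φ x‖ := by
        rw [hfdu x]
        refine (norm_add_le _ _).trans ?_
        rw [norm_smul, norm_smul, Real.norm_eq_abs, Real.norm_eq_abs,
          abs_of_nonneg (hφ0 x), abs_of_nonneg (hvpos x).le]
        have h1 := hφ1 x
        nlinarith [norm_nonneg (fderiv ℝ v x)]
      have hb2 : ‖fderiv ℝ u x‖ ^ 2 ≤ 2 * A x + 2 * v x ^ 2 * ‖fderiv ℝ φ x‖ ^ 2 := by
        have h := pow_le_pow_left₀ (norm_nonneg _) hb1 2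
        have h2 := hAfd x
        nlinarith [sq_nonneg (‖fderiv ℝ v x‖ - v x * ‖fderiv ℝ φ x‖)]
      have habs2 : |‖fderiv ℝ u x‖ ^ 2 - A x|
          ≤ 3 * A x + 2 * v x ^ 2 * ‖fderiv ℝ φ x‖ ^ 2 := by
        rw [abs_le]
        constructor
        · nlinarith [sq_nonneg ‖fderiv ℝ u x‖, hA0 x, sq_nonneg (v x * ‖fderiv ℝ φ x‖),
            sq_nonneg (v x), sq_nonneg ‖fderiv ℝ φ x‖, mul_nonneg (sq_nonneg (v x)) (sq_nonneg ‖fderiv ℝ φ x‖)]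
        · nlinarith [hA0 x, mul_nonneg (sq_nonneg (v x)) (sq_nonneg ‖fderiv ℝ φ x‖)]
      have hg1 : 3 * A x ≤ S1.indicator (fun y : EE => 3 * (Real.sqrt 3 * ε) * (‖y‖ ^ 4)⁻¹) x := by
        rw [Set.indicator_of_mem hxS1]
        have hD := hN x
        have hAle : A x ≤ Real.sqrt 3 * ε * (‖x‖ ^ 4)⁻¹ := by
          rw [hA]
          have h1 : (‖x‖ ^ 2) ^ 3 ≤ (ε ^ 2 + ‖x‖ ^ 2) ^ 3 :=
            pow_le_pow_left₀ (sq_nonneg _) (by nlinarith [sq_nonneg ε]) 3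
          have h2 : (0:ℝ) < (‖x‖ ^ 2) ^ 3 := by positivity
          calc Real.sqrt 3 * ε * ‖x‖ ^ 2 / (ε ^ 2 + ‖x‖ ^ 2) ^ 3
              ≤ Real.sqrt 3 * ε * ‖x‖ ^ 2 / (‖x‖ ^ 2) ^ 3 := by
                apply div_le_div_of_nonneg_left (by positivity) h2 h1
            _ = Real.sqrt 3 * ε * (‖x‖ ^ 4)⁻¹ := by
                field_simp
        linarith
      have hg2 : 2 * v x ^ 2 * ‖fderiv ℝ φ x‖ ^ 2
          ≤ S2.indicator (fun _ : EE => 2 * M ^ 2 * (Real.sqrt 3 * ε) / r ^ 2) x := by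
        by_cases hx2 : x ∈ S2
        · rw [Set.indicator_of_mem hx2]
          have hv2 : v x ^ 2 ≤ Real.sqrt 3 * ε / r ^ 2 := by
            rw [hvsq x]
            apply div_le_div_of_nonneg_left (by positivity) (by positivity)
            nlinarith [sq_nonneg ε]
          have hDφ2 : ‖fderiv ℝ φ x‖ ^ 2 ≤ M ^ 2 := pow_le_pow_left₀ (norm_nonneg _) (hM x) 2
          have h2 : v x ^ 2 * ‖fderiv ℝ φ x‖ ^ 2 ≤ Real.sqrt 3 * ε / r ^ 2 * M ^ 2 :=
            mul_le_mul hv2 hDφ2 (sq_nonneg _) (by positivity)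
          calc 2 * v x ^ 2 * ‖fderiv ℝ φ x‖ ^ 2
              = 2 * (v x ^ 2 * ‖fderiv ℝ φ x‖ ^ 2) := by ring
            _ ≤ 2 * (Real.sqrt 3 * ε / r ^ 2 * M ^ 2) := by linarith
            _ = 2 * M ^ 2 * (Real.sqrt 3 * ε) / r ^ 2 := by ring
        · have hfd0 : fderiv ℝ φ x = 0 := by
            have hts : tsupport φ ⊆ S2 := closure_minimal hφsupp Metric.isClosed_closedBall
            by_contra hne
            exact hx2 (hts (support_fderiv_subset ℝ (by simpa using hne)))
          rw [Set.indicator_of_notMem hx2, hfd0]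
          simp
      rw [hg]
      calc |‖fderiv ℝ u x‖ ^ 2 - A x| ≤ 3 * A x + 2 * v x ^ 2 * ‖fderiv ℝ φ x‖ ^ 2 := habs2
        _ ≤ _ := add_le_add hg1 hg2
  have habs : |∫ x : EE, (‖fderiv ℝ u x‖ ^ 2 - A x)|
      ≤ ∫ x : EE, |‖fderiv ℝ u x‖ ^ 2 - A x| := by
    simpa [Real.norm_eq_abs] using
      norm_integral_le_integral_norm (fun x : EE => ‖fderiv ℝ u x‖ ^ 2 - A x)
  have hmono : ∫ x : EE, |‖fderiv ℝ u x‖ ^ 2 - A x| ≤ ∫ x : EE, g x :=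
    integral_mono (hint_u.sub hint_A).abs hgint hptwise
  have hgval : ∫ x : EE, g x
      = 3 * (Real.sqrt 3 * ε) * K1 + 2 * M ^ 2 * (Real.sqrt 3 * ε) / r ^ 2 * K2 := by
    rw [hg, integral_add hgint1 hgint2, integral_indicator hS1m, integral_indicator hS2m,
      setIntegral_const, smul_eq_mul, integral_const_mul, ← hK1, measureReal_def, ← hK2]
    ring
  have hfinal : 3 * (Real.sqrt 3 * ε) * K1 + 2 * M ^ 2 * (Real.sqrt 3 * ε) / r ^ 2 * K2
      ≤ (3 * Real.sqrt 3 * K1 + 2 * M ^ 2 * Real.sqrt 3 / r ^ 2 * K2 + 1) * ε := by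
    have heq : 3 * (Real.sqrt 3 * ε) * K1 + 2 * M ^ 2 * (Real.sqrt 3 * ε) / r ^ 2 * K2
        = (3 * Real.sqrt 3 * K1 + 2 * M ^ 2 * Real.sqrt 3 / r ^ 2 * K2) * ε := by ring
    rw [heq]
    nlinarith [hε]
  calc |∫ x : EE, (‖fderiv ℝ u x‖ ^ 2 - A x)|
      ≤ ∫ x : EE, |‖fderiv ℝ u x‖ ^ 2 - A x| := habs
    _ ≤ ∫ x : EE, g x := hmono
    _ = 3 * (Real.sqrt 3 * ε) * K1 + 2 * M ^ 2 * (Real.sqrt 3 * ε) / r ^ 2 * K2 := hgval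
    _ ≤ _ := hfinal
end

section
/- Let r > 0 and let φ : ℝ³ → ℝ be a smooth function with 0 ≤ φ ≤ 1, φ ≡ 1 on the closed ball of radius r centered at 0, and support contained in the closed ball of radius 2r centered at 0. Define u_ε := φ·v_ε. Then there exist constants C > 0 and ε₀ > 0 such that for all ε ∈ (0, ε₀), |∫_{ℝ³} u_ε(x)⁶ dx − 3^(3/2)·π²/4| ≤ C·ε³. -/
open Real MeasureTheory


private lemma aux1D (ε : ℝ) (hε : 0 < ε) :
    IntegrableOn (fun t : ℝ => t ^ 2 / (ε ^ 2 + t ^ 2) ^ 3) (Set.Ioi 0) ∧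
      ∫ t in Set.Ioi (0:ℝ), t ^ 2 / (ε ^ 2 + t ^ 2) ^ 3 = π / (16 * ε ^ 3) := by
  have hεne : ε ≠ 0 := hε.ne'
  set F : ℝ → ℝ := fun t => -t / (4 * (ε ^ 2 + t ^ 2) ^ 2)
      + t / (8 * ε ^ 2 * (ε ^ 2 + t ^ 2)) + Real.arctan (t / ε) / (8 * ε ^ 3) with hFdef
  have hderiv : ∀ t ∈ Set.Ici (0:ℝ), HasDerivAt F (t ^ 2 / (ε ^ 2 + t ^ 2) ^ 3) t := by
    intro t _
    have hden : (ε ^ 2 + t ^ 2) ≠ 0 := by positivity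
    have hd : HasDerivAt (fun t : ℝ => ε ^ 2 + t ^ 2) (2 * t) t := by
      simpa using (hasDerivAt_pow 2 t).const_add (ε ^ 2)
    have h1 := (hasDerivAt_id t).neg.div ((hd.pow 2).const_mul 4) (by simp only [Pi.pow_apply]; positivity)
    have h2 := (hasDerivAt_id t).div (hd.const_mul (8 * ε ^ 2)) (by positivity)
    have h3 := ((Real.hasDerivAt_arctan (t / ε)).comp t
      ((hasDerivAt_id t).div_const ε)).div_const (8 * ε ^ 3)
    have h : HasDerivAt F _ t := (h1.add h2).add h3
    convert h using 1
    have h1 : (1 : ℝ) + (t / ε) ^ 2 ≠ 0 := by positivity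
    simp only [Pi.pow_apply, Pi.neg_apply, id_eq]
    field_simp
    ring
  have g'pos : ∀ t ∈ Set.Ioi (0:ℝ), 0 ≤ t ^ 2 / (ε ^ 2 + t ^ 2) ^ 3 := fun t _ => by positivity
  have l1 : Filter.Tendsto (fun t : ℝ => -t / (4 * (ε ^ 2 + t ^ 2) ^ 2)) Filter.atTop (nhds 0) := by
    have : Filter.Tendsto (fun t : ℝ => t / (4 * (ε ^ 2 + t ^ 2) ^ 2)) Filter.atTop (nhds 0) := by
      apply squeeze_zero' (g := fun t : ℝ => t⁻¹)
      · filter_upwards [Filter.eventually_gt_atTop 0] with t ht; positivity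
      · filter_upwards [Filter.eventually_ge_atTop 1] with t ht
        have ht0 : (0:ℝ) < t := lt_of_lt_of_le one_pos ht
        rw [inv_eq_one_div, div_le_div_iff₀ (by positivity) ht0]
        have h2 : (1:ℝ) ≤ ε ^ 2 + t ^ 2 := by nlinarith
        nlinarith [sq_nonneg ε]
      · exact tendsto_inv_atTop_zero
    simpa [neg_div] using this.neg
  have l2 : Filter.Tendsto (fun t : ℝ => t / (8 * ε ^ 2 * (ε ^ 2 + t ^ 2)))
      Filter.atTop (nhds 0) := by
    apply squeeze_zero' (g := fun t : ℝ => (8 * ε ^ 2)⁻¹ * t⁻¹)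
    · filter_upwards [Filter.eventually_gt_atTop 0] with t ht; positivity
    · filter_upwards [Filter.eventually_gt_atTop 0] with t ht
      rw [div_le_iff₀ (by positivity)]
      have : (8 * ε ^ 2)⁻¹ * t⁻¹ * (8 * ε ^ 2 * (ε ^ 2 + t ^ 2))
          = (ε ^ 2 + t ^ 2) / t := by field_simp
      rw [this, le_div_iff₀ ht]
      nlinarith [sq_nonneg ε]
    · have h0 : Filter.Tendsto (fun t : ℝ => (8 * ε ^ 2)⁻¹ * t⁻¹) Filter.atTop
          (nhds ((8 * ε ^ 2)⁻¹ * 0)) := tendsto_inv_atTop_zero.const_mul _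
      rwa [mul_zero] at h0
  have l3 : Filter.Tendsto (fun t : ℝ => Real.arctan (t / ε) / (8 * ε ^ 3))
      Filter.atTop (nhds (π / 2 / (8 * ε ^ 3))) := by
    have harg : Filter.Tendsto (fun t : ℝ => t / ε) Filter.atTop Filter.atTop :=
      Filter.tendsto_id.atTop_div_const hε
    exact ((Real.tendsto_arctan_atTop.mono_right nhdsWithin_le_nhds).comp harg).div_const _
  have hlim : Filter.Tendsto F Filter.atTop (nhds (π / (16 * ε ^ 3))) := by
    have := (l1.add l2).add l3
    have he : (0 : ℝ) + 0 + π / 2 / (8 * ε ^ 3) = π / (16 * ε ^ 3) := by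
      rw [zero_add, zero_add, div_div]; ring_nf
    rwa [he] at this
  have hF0 : F 0 = 0 := by simp [hFdef]
  refine ⟨integrableOn_Ioi_deriv_of_nonneg' hderiv g'pos hlim, ?_⟩
  rw [integral_Ioi_of_hasDerivAt_of_nonneg' hderiv g'pos hlim, hF0, sub_zero]

private lemma auxVol :
    (volume (Metric.ball (0 : EuclideanSpace ℝ (Fin 3)) 1)).toReal = 4 * π / 3 := by
  have hΓ : Real.Gamma ((3:ℝ) / 2 + 1) = 3 / 4 * Real.sqrt π := by
    rw [Real.Gamma_add_one (by norm_num), show (3:ℝ)/2 = 1/2 + 1 by norm_num,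
      Real.Gamma_add_one (by norm_num), Real.Gamma_one_half_eq]
    ring
  rw [EuclideanSpace.volume_ball]
  simp only [Fintype.card_fin]
  rw [show ((3:ℕ):ℝ) / 2 + 1 = (3:ℝ)/2 + 1 by norm_num, hΓ]
  rw [ENNReal.ofReal_one, one_pow, one_mul, ENNReal.toReal_ofReal (by positivity)]
  have h3 : Real.sqrt π ^ 3 = π * Real.sqrt π := by
    rw [pow_succ, Real.sq_sqrt pi_pos.le]
  rw [h3]
  have hs : Real.sqrt π ≠ 0 := by positivity
  field_simp

private lemma auxPolar (ε : ℝ) (hε : 0 < ε) :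
    Integrable (fun x : EuclideanSpace ℝ (Fin 3) => 1 / (ε ^ 2 + ‖x‖ ^ 2) ^ 3) ∧
      ∫ x : EuclideanSpace ℝ (Fin 3), 1 / (ε ^ 2 + ‖x‖ ^ 2) ^ 3 = π ^ 2 / (4 * ε ^ 3) := by
  constructor
  · have h6 : (Module.finrank ℝ (EuclideanSpace ℝ (Fin 3)) : ℝ) < 6 := by
      rw [finrank_euclideanSpace]; norm_num
    have hint := integrable_rpow_neg_one_add_norm_sq (μ := volume)
      (E := EuclideanSpace ℝ (Fin 3)) h6
    set m : ℝ := min 1 (ε ^ 2) with hm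
    have hm0 : 0 < m := lt_min one_pos (by positivity)
    refine (hint.const_mul (m⁻¹ ^ 3)).mono' ?_ (Filter.Eventually.of_forall fun x => ?_)
    · apply Continuous.aestronglyMeasurable
      have : Continuous fun x : EuclideanSpace ℝ (Fin 3) => (ε ^ 2 + ‖x‖ ^ 2) ^ 3 :=
        (continuous_const.add ((continuous_norm).pow 2)).pow 3
      exact continuous_const.div this fun x => by positivity
    · have hb : (0:ℝ) ≤ ‖x‖ ^ 2 := by positivity
      have hrw : ((1:ℝ) + ‖x‖ ^ 2) ^ (-(6:ℝ) / 2) = (((1:ℝ) + ‖x‖ ^ 2) ^ 3)⁻¹ := by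
        rw [show (-(6:ℝ)/2) = -((3:ℕ):ℝ) by norm_num, Real.rpow_neg (by positivity),
          Real.rpow_natCast]
      rw [hrw]
      rw [Real.norm_eq_abs, abs_of_nonneg (by positivity)]
      rw [div_le_iff₀ (by positivity)]
      have key : m ^ 3 * (1 + ‖x‖ ^ 2) ^ 3 ≤ (ε ^ 2 + ‖x‖ ^ 2) ^ 3 := by
        have h1 : m * (1 + ‖x‖ ^ 2) ≤ ε ^ 2 + ‖x‖ ^ 2 := by
          have := min_le_left (1:ℝ) (ε ^ 2)
          have := min_le_right (1:ℝ) (ε ^ 2)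
          nlinarith
        calc m ^ 3 * (1 + ‖x‖ ^ 2) ^ 3 = (m * (1 + ‖x‖ ^ 2)) ^ 3 := by ring
          _ ≤ (ε ^ 2 + ‖x‖ ^ 2) ^ 3 := by
              apply pow_le_pow_left₀ (by positivity) h1
      have hrw2 : m⁻¹ ^ 3 * ((1 + ‖x‖ ^ 2) ^ 3)⁻¹ * (ε ^ 2 + ‖x‖ ^ 2) ^ 3
          = (ε ^ 2 + ‖x‖ ^ 2) ^ 3 / (m ^ 3 * (1 + ‖x‖ ^ 2) ^ 3) := by
        field_simp
      rw [hrw2, le_div_iff₀ (by positivity), one_mul]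
      exact key
  · have hpolar := MeasureTheory.integral_fun_norm_addHaar
      (volume : Measure (EuclideanSpace ℝ (Fin 3))) (fun y : ℝ => 1 / (ε ^ 2 + y ^ 2) ^ 3)
    simp only [finrank_euclideanSpace, Fintype.card_fin, smul_eq_mul, nsmul_eq_mul] at hpolar
    rw [hpolar, measureReal_def, auxVol]
    have : ∫ y in Set.Ioi (0:ℝ), y ^ (3 - 1) * (1 / (ε ^ 2 + y ^ 2) ^ 3)
        = ∫ y in Set.Ioi (0:ℝ), y ^ 2 / (ε ^ 2 + y ^ 2) ^ 3 := by
      congr 1 with y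
      rw [mul_one_div]
    rw [this, (aux1D ε hε).2]
    field_simp
    ring

/-- With `φ` a smooth cutoff (`0 ≤ φ ≤ 1`, `φ ≡ 1` on `closedBall 0 r`,
support in `closedBall 0 (2r)`) and `u_ε = φ v_ε`, there are `C > 0`, `ε₀ > 0` such that
for all `ε ∈ (0, ε₀)`, `|∫ u_ε⁶ - 3^(3/2) π²/4| ≤ C ε³`. -/
theorem stmt_12 (r : ℝ) (hr : 0 < r) (φ : EuclideanSpace ℝ (Fin 3) → ℝ)
    (hφ : ContDiff ℝ (⊤ : ℕ∞) φ) (hφ0 : ∀ x, 0 ≤ φ x) (hφ1 : ∀ x, φ x ≤ 1)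
    (hφeq : ∀ x ∈ Metric.closedBall (0 : EuclideanSpace ℝ (Fin 3)) r, φ x = 1)
    (hφsupp : Function.support φ ⊆ Metric.closedBall (0 : EuclideanSpace ℝ (Fin 3)) (2 * r)) :
    ∃ C > (0 : ℝ), ∃ ε₀ > (0 : ℝ), ∀ ε : ℝ, 0 < ε → ε < ε₀ →
      |(∫ x : EuclideanSpace ℝ (Fin 3),
          (φ x * (3 ^ ((1 : ℝ) / 4) * ε ^ ((1 : ℝ) / 2)
            * (ε ^ 2 + ‖x‖ ^ 2) ^ (-(1 : ℝ) / 2))) ^ 6)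
        - 3 ^ ((3 : ℝ) / 2) * π ^ 2 / 4| ≤ C * ε ^ 3 := by
  refine ⟨2 * 3 ^ ((3:ℝ)/2) * π ^ 2 / r ^ 3, by positivity, 1, one_pos, fun ε hε _ => ?_⟩
  set g : EuclideanSpace ℝ (Fin 3) → ℝ :=
    fun x => 3 ^ ((3:ℝ)/2) * ε ^ 3 * (1 / (ε ^ 2 + ‖x‖ ^ 2) ^ 3) with hgdef
  set u : EuclideanSpace ℝ (Fin 3) → ℝ :=
    fun x => (φ x * (3 ^ ((1 : ℝ) / 4) * ε ^ ((1 : ℝ) / 2)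
      * (ε ^ 2 + ‖x‖ ^ 2) ^ (-(1 : ℝ) / 2))) ^ 6 with hudef
  -- pointwise identity for v^6
  have hvpow : ∀ x : EuclideanSpace ℝ (Fin 3),
      (3 ^ ((1:ℝ)/4) * ε ^ ((1:ℝ)/2) * (ε ^ 2 + ‖x‖ ^ 2) ^ (-(1:ℝ)/2)) ^ 6 = g x := by
    intro x
    have hb : (0:ℝ) ≤ ε ^ 2 + ‖x‖ ^ 2 := by positivity
    have h1 : (ε ^ ((1:ℝ)/2)) ^ 6 = ε ^ 3 := by
      rw [← Real.rpow_natCast (ε ^ ((1:ℝ)/2)) 6, ← Real.rpow_mul hε.le,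
        show (1:ℝ)/2 * ((6:ℕ):ℝ) = ((3:ℕ):ℝ) by norm_num, Real.rpow_natCast]
    have h2 : ((ε ^ 2 + ‖x‖ ^ 2) ^ (-(1:ℝ)/2)) ^ 6 = 1 / (ε ^ 2 + ‖x‖ ^ 2) ^ 3 := by
      rw [← Real.rpow_natCast ((ε ^ 2 + ‖x‖ ^ 2) ^ (-(1:ℝ)/2)) 6, ← Real.rpow_mul hb,
        show -(1:ℝ)/2 * ((6:ℕ):ℝ) = -((3:ℕ):ℝ) by norm_num, Real.rpow_neg hb,
        Real.rpow_natCast, one_div]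
    have h3 : ((3:ℝ) ^ ((1:ℝ)/4)) ^ 6 = 3 ^ ((3:ℝ)/2) := by
      rw [← Real.rpow_natCast ((3:ℝ) ^ ((1:ℝ)/4)) 6, ← Real.rpow_mul (by norm_num)]
      norm_num
    rw [mul_pow, mul_pow, h1, h2, h3, hgdef]
  have hg_int : Integrable g := ((auxPolar ε hε).1.const_mul _)
  have hg_val : ∫ x : EuclideanSpace ℝ (Fin 3), g x = 3 ^ ((3:ℝ)/2) * π ^ 2 / 4 := by
    rw [hgdef]
    simp only [integral_const_mul]
    rw [(auxPolar ε hε).2]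
    field_simp
  -- measurability of u
  have hu_meas : AEStronglyMeasurable u volume := by
    apply Continuous.aestronglyMeasurable
    apply Continuous.pow
    apply (hφ.continuous).mul
    apply Continuous.mul continuous_const
    apply Continuous.rpow_const (continuous_const.add ((continuous_norm).pow 2))
    intro x
    exact Or.inl (by simp only [Pi.add_apply, Pi.pow_apply]; positivity)
  -- u ≤ g pointwise (in norm)
  have hu_le : ∀ x, ‖u x‖ ≤ g x := by
    intro x
    rw [hudef, Real.norm_eq_abs]
    beta_reduce
    rw [mul_pow, abs_of_nonneg (by positivity), hvpow x]
    have hφ6 : (φ x) ^ 6 ≤ 1 := pow_le_one₀ (hφ0 x) (hφ1 x)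
    have hgpos : 0 ≤ g x := by rw [hgdef]; positivity
    nlinarith [pow_nonneg (hφ0 x) 6]
  have hu_int : Integrable u := hg_int.mono' hu_meas (Filter.Eventually.of_forall hu_le)
  -- the error bound function
  set h : EuclideanSpace ℝ (Fin 3) → ℝ :=
    fun x => 8 * 3 ^ ((3:ℝ)/2) * ε ^ 3 * (1 / (r ^ 2 + ‖x‖ ^ 2) ^ 3) with hhdef
  have hh_int : Integrable h := ((auxPolar r hr).1.const_mul _)
  have hbound : ∀ x, ‖u x - g x‖ ≤ h x := by
    intro x
    have hgpos : 0 ≤ g x := by rw [hgdef]; positivity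
    have hhpos : 0 ≤ h x := by rw [hhdef]; positivity
    rw [hudef, Real.norm_eq_abs]
    beta_reduce
    rw [mul_pow, hvpow x]
    by_cases hx : ‖x‖ ≤ r
    · rw [hφeq x (by simpa [Metric.mem_closedBall, dist_zero_right] using hx)]
      simpa using hhpos
    · push_neg at hx
      have hφ6 : (φ x) ^ 6 ≤ 1 := pow_le_one₀ (hφ0 x) (hφ1 x)
      have habs : |(φ x) ^ 6 * g x - g x| ≤ g x := by
        rw [abs_of_nonpos (by nlinarith)]
        nlinarith [pow_nonneg (hφ0 x) 6]
      refine habs.trans ?_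
      rw [hgdef, hhdef]
      simp only
      have hcube : (r ^ 2 + ‖x‖ ^ 2) ^ 3 ≤ 8 * (ε ^ 2 + ‖x‖ ^ 2) ^ 3 := by
        have h1 : r ^ 2 + ‖x‖ ^ 2 ≤ 2 * (ε ^ 2 + ‖x‖ ^ 2) := by nlinarith
        calc (r ^ 2 + ‖x‖ ^ 2) ^ 3 ≤ (2 * (ε ^ 2 + ‖x‖ ^ 2)) ^ 3 :=
              pow_le_pow_left₀ (by positivity) h1 3
          _ = 8 * (ε ^ 2 + ‖x‖ ^ 2) ^ 3 := by ring
      rw [mul_one_div, mul_one_div, div_le_div_iff₀ (by positivity) (by positivity)]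
      have h30 : (0:ℝ) < 3 ^ ((3:ℝ)/2) := by positivity
      nlinarith [mul_le_mul_of_nonneg_left hcube (by positivity : (0:ℝ) ≤ 3 ^ ((3:ℝ)/2) * ε ^ 3)]
  have hh_val : ∫ x : EuclideanSpace ℝ (Fin 3), h x
      = (2 * 3 ^ ((3:ℝ)/2) * π ^ 2 / r ^ 3) * ε ^ 3 := by
    rw [hhdef]
    simp only [integral_const_mul]
    rw [(auxPolar r hr).2]
    field_simp
    ring
  calc |(∫ x : EuclideanSpace ℝ (Fin 3), u x) - 3 ^ ((3:ℝ)/2) * π ^ 2 / 4|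
      = ‖∫ x : EuclideanSpace ℝ (Fin 3), (u x - g x)‖ := by
        rw [integral_sub hu_int hg_int, hg_val, Real.norm_eq_abs]
    _ ≤ ∫ x : EuclideanSpace ℝ (Fin 3), h x :=
        norm_integral_le_of_norm_le hh_int (Filter.Eventually.of_forall hbound)
    _ = (2 * 3 ^ ((3:ℝ)/2) * π ^ 2 / r ^ 3) * ε ^ 3 := hh_val
end
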